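/- With s_{z,k} := e_z e_0^{k−1}, the recursion for the harmonic product is equivalent to: s_{a,k} w ∗ s_{b,l} w' = s_{ab,k}(w ∗ s_{b,l} w') + s_{ab,l}(s_{a,k} w ∗ w') − s_{ab,k+l}(w ∗ w') for all a, b ∈ M, positive integers k, l, and w, w' ∈ 𝔥_M. -/

import Mathlib

open scoped BigOperators

/-- `𝔥_M`: the noncommutative polynomial ring `ℚ⟨e_z : z ∈ M⟩`, realized as the
monoid algebra of the free monoid on `M` over `ℚ` (concatenation product). -/
abbrev H (M : Type*) [MonoidWithZero M] : Type _ := MonoidAlgebra ℚ (FreeMonoid M)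

variable {M : Type*} [MonoidWithZero M]

/-- The word `e_{a_1} ⋯ e_{a_k}` as an element of `𝔥_M`. -/
noncomputable def wrd (l : List M) : H M := MonoidAlgebra.single (FreeMonoid.ofList l) 1

/-- The generator `e_z`. -/
noncomputable def e (z : M) : H M := wrd [z]

/-- The harmonic product on words, defined by the recursion
`e_a w ∗ e_b w' = e_{ab}(w ∗ e_b w' + e_a w ∗ w' − e_0 (w ∗ w'))`. -/
noncomputable def har : List M → List M → H M
  | [], w => wrd w
  | a :: w, [] => wrd (a :: w)
  | a :: w, b :: w' =>
      wrd [a * b] * (har w (b :: w') + har (a :: w) w' - wrd [0] * har w w')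
termination_by w w' => w.length + w'.length
decreasing_by all_goals (simp; try omega)

/-- The harmonic product `∗` on `𝔥_M`, extended ℚ-bilinearly from words. -/
noncomputable def hmul (f g : H M) : H M :=
  Finsupp.sum f.coeff fun w a => Finsupp.sum g.coeff fun w' b =>
    (a * b) • har (FreeMonoid.toList w) (FreeMonoid.toList w')

/-- Powers with respect to the harmonic product. -/
noncomputable def hpow (a : H M) : ℕ → H M
  | 0 => 1
  | n + 1 => hmul a (hpow a n)

/-- `s_{z,k} = e_z e_0^{k-1}` (concatenation product). -/
noncomputable def s (z : M) (k : ℕ) : H M := e z * (e 0) ^ (k - 1)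

/-- `sprod z k n = s_{z^n,k} s_{z^{n-1},k} ⋯ s_{z,k}` (concatenation), `sprod z k 0 = 1`. -/
noncomputable def sprod (z : M) (k : ℕ) : ℕ → H M
  | 0 => 1
  | n + 1 => s (z ^ (n + 1)) k * sprod z k n

/-- Cauchy product of power series over `(𝔥_M, ∗)`, represented as coefficient sequences. -/
noncomputable def hmulPS (f g : ℕ → H M) : ℕ → H M :=
  fun n => ∑ i ∈ Finset.range (n + 1), hmul (f i) (g (n - i))

/-- Powers of a power series w.r.t. the harmonic product. -/
noncomputable def psPow (f : ℕ → H M) : ℕ → (ℕ → H M)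
  | 0 => fun n => if n = 0 then 1 else 0
  | m + 1 => hmulPS f (psPow f m)

/-- `exp_∗` of a power series with zero constant term (coefficientwise). -/
noncomputable def expPS (f : ℕ → H M) : ℕ → H M :=
  fun n => ∑ m ∈ Finset.range (n + 1), ((Nat.factorial m : ℚ))⁻¹ • psPow f m n

/-- Coefficients of the formal sine `S_z(x) = Σ_{n≥0} s_{z^n,2}⋯s_{z,2} x^{2n+1}`. -/
noncomputable def Scoef (z : M) (d : ℕ) : H M :=
  if d % 2 = 1 then sprod z 2 (d / 2) else 0

/-- Coefficients of the formal cosine `C_z(x) = S_z'(x)`. -/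
noncomputable def Ccoef (z : M) (d : ℕ) : H M := ((d : ℚ) + 1) • Scoef z (d + 1)

/-- `w_{z,n} = (2n+1)! s_{z^n,2} ⋯ s_{z,2}`. -/
noncomputable def wz (z : M) (n : ℕ) : H M := ((Nat.factorial (2 * n + 1) : ℚ)) • sprod z 2 n

/-- `g_{z,m,n} = w_{z,m+n} − w_{z,m} ∗ w_{z,n}`. -/
noncomputable def gz (z : M) (m n : ℕ) : H M := wz z (m + n) - hmul (wz z m) (wz z n)

/-- Coefficient of `x^i y^j` in `A_z(x,y) = S_z(x+y) − S_z(x) ∗ C_z(y) − C_z(x) ∗ S_z(y)`. -/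
noncomputable def Acoef (z : M) (i j : ℕ) : H M :=
  (Nat.choose (i + j) i : ℚ) • Scoef z (i + j)
    - hmul (Scoef z i) (Ccoef z j) - hmul (Ccoef z i) (Scoef z j)

/-- Coefficient of `x^d` in `P_z(x) = −w_{z,1} ∗ S_z(x)^{∗2} + C_z(x)^{∗2}`. -/
noncomputable def Pcoef (z : M) (d : ℕ) : H M :=
  -(hmul (wz z 1) (hmulPS (Scoef z) (Scoef z) d)) + hmulPS (Ccoef z) (Ccoef z) d


/-- Coefficients of `S^T_{z,k}(x) = Σ_{n≥0} s_{z^n,k}⋯s_{z,k} x^{(n+1)k−1}`. -/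
noncomputable def STcoef (z : M) (k : ℕ) (d : ℕ) : H M :=
  if k ∣ (d + 1) then sprod z k ((d + 1) / k - 1) else 0

/-- Coefficients of the series `Σ_{n≥1} (s_{z^n,nk}/n) x^{nk}`. -/
noncomputable def gexp (z : M) (k : ℕ) (d : ℕ) : H M :=
  if d ≠ 0 ∧ k ∣ d then (((d / k : ℕ) : ℚ))⁻¹ • s (z ^ (d / k)) d else 0

/-- Coefficients of `S^R_{z,k}(x) = x^{k−1} exp_∗(Σ_{n≥1} (s_{z^n,nk}/n) x^{nk})`. -/
noncomputable def SRcoef (z : M) (k : ℕ) (d : ℕ) : H M :=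
  if k - 1 ≤ d then expPS (gexp z k) (d - (k - 1)) else 0

/-- Admissible words spanning `𝔥^0_M = ℚ ⊕ ⨁_{a≠0,1} 𝔥_M e_a ⊕ ⨁_{a≠0,b≠1} e_a 𝔥_M e_b`. -/
def adm0 (l : List M) : Prop :=
  l = [] ∨ ∃ h : l ≠ [],
    (l.getLast h ≠ 0 ∧ l.getLast h ≠ 1) ∨ (l.head h ≠ 0 ∧ l.getLast h ≠ 1)

/-- The subspace `𝔥^0_M`. -/
noncomputable def H0 (M : Type*) [MonoidWithZero M] : Submodule ℚ (H M) :=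
  Submodule.span ℚ {x | ∃ l : List M, adm0 l ∧ x = wrd l}

/-- Words spanning `𝔥^1_M = ⨁_{m≥0} 𝔥^0_M e_1^m`. -/
def adm1 (l : List M) : Prop :=
  ∃ (l₀ : List M) (m : ℕ), adm0 l₀ ∧ l = l₀ ++ List.replicate m 1

/-- The subspace `𝔥^1_M`. -/
noncomputable def H1 (M : Type*) [MonoidWithZero M] : Submodule ℚ (H M) :=
  Submodule.span ℚ {x | ∃ l : List M, adm1 l ∧ x = wrd l}

/-- `ℓ(w)`: the number of letters `e_a` of a word with `a ≠ 0`. -/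
noncomputable def lcount (l : List M) : ℕ :=
  l.countP fun a => @decide (a ≠ 0) (Classical.propDecidable _)

/-- `ℱ_d 𝔥^0_M`: span of admissible words `w` with `ℓ(w) ≤ d`. -/
noncomputable def F0 (M : Type*) [MonoidWithZero M] (d : ℕ) : Submodule ℚ (H M) :=
  Submodule.span ℚ {x | ∃ l : List M, adm0 l ∧ lcount l ≤ d ∧ x = wrd l}

/-- The ideal of `(𝔥_M, ∗)` generated by a set. -/
noncomputable def genIdeal (S : Set (H M)) : Submodule ℚ (H M) :=
  Submodule.span ℚ {x | ∃ a y, y ∈ S ∧ x = hmul a y}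

/-- The product on the polynomial ring `𝔥_{M,∗}[S,T]` (represented as
finitely supported coefficient families indexed by monomials `S^i T^j`). -/
noncomputable def polyMul2 (f g : (ℕ × ℕ) →₀ H M) : (ℕ × ℕ) →₀ H M :=
  Finsupp.sum f fun p a => Finsupp.sum g fun q b => Finsupp.single (p + q) (hmul a b)

/-- `φ : 𝔥^0_{M,∗}[S,T] → 𝔥_{M,∗}`, `Σ w_{ij} S^i T^j ↦ Σ w_{ij} ∗ e_0^{∗i} ∗ e_1^{∗j}`. -/
noncomputable def phi2 (f : (ℕ × ℕ) →₀ H M) : H M :=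
  Finsupp.sum f fun p a => hmul a (hmul (hpow (e 0) p.1) (hpow (e 1) p.2))

/-- The product on `𝔥_{M,∗}[S]`. -/
noncomputable def polyMul1 (f g : ℕ →₀ H M) : ℕ →₀ H M :=
  Finsupp.sum f fun p a => Finsupp.sum g fun q b => Finsupp.single (p + q) (hmul a b)

/-- `φ₁ : 𝔥^1_{M,∗}[S] → 𝔥_{M,∗}`, `Σ w_i S^i ↦ Σ w_i ∗ e_0^{∗i}`. -/
noncomputable def phi1 (f : ℕ →₀ H M) : H M :=
  Finsupp.sum f fun i a => hmul a (hpow (e 0) i)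

/-! The defining recursion of `har` on words extends bilinearly to arbitrary `x y : 𝔥_M`:
`e_a x ∗ e_b y = e_{ab}(x ∗ e_b y + e_a x ∗ y − e_0 (x ∗ y))`. Since `s_{z,k+2} = e_z s_{0,k+1}`,
the recursion for the `s_{z,k}` then follows by induction on `k` and `l`: expand the left-hand side
once with the `e`-recursion and apply the induction hypothesis to the three shorter products,
whose leading letters all multiply to `0`. -/

lemma hmul_add_left (f g h : H M) : hmul (f + g) h = hmul f h + hmul g h := by
  unfold hmul
  rw [MonoidAlgebra.coeff_add, Finsupp.sum_add_index'] <;> simp [add_mul, add_smul, Finsupp.sum_add]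

lemma hmul_add_right (f g h : H M) : hmul f (g + h) = hmul f g + hmul f h := by
  unfold hmul
  rw [← Finsupp.sum_add]
  refine Finsupp.sum_congr fun w _ => ?_
  rw [MonoidAlgebra.coeff_add, Finsupp.sum_add_index'] <;> simp [mul_add, add_smul]

lemma hmul_smul_left (c : ℚ) (f g : H M) : hmul (c • f) g = c • hmul f g := by
  unfold hmul
  rw [MonoidAlgebra.coeff_smul, Finsupp.sum_smul_index (fun _ => by simp), Finsupp.smul_sum]
  refine Finsupp.sum_congr fun w _ => ?_
  rw [Finsupp.smul_sum]
  refine Finsupp.sum_congr fun w' _ => ?_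
  rw [smul_smul, mul_assoc]

lemma hmul_smul_right (c : ℚ) (f g : H M) : hmul f (c • g) = c • hmul f g := by
  unfold hmul
  rw [Finsupp.smul_sum]
  refine Finsupp.sum_congr fun w _ => ?_
  rw [MonoidAlgebra.coeff_smul, Finsupp.sum_smul_index (fun _ => by simp), Finsupp.smul_sum]
  refine Finsupp.sum_congr fun w' _ => ?_
  rw [smul_smul, mul_left_comm]

noncomputable def hmulₗ : H M →ₗ[ℚ] H M →ₗ[ℚ] H M :=
  LinearMap.mk₂ ℚ hmul hmul_add_left hmul_smul_left hmul_add_right hmul_smul_right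

@[simp] lemma hmulₗ_apply (f g : H M) : hmulₗ f g = hmul f g := rfl

lemma hmul_wrd_wrd (u v : List M) : hmul (wrd u) (wrd v) = har u v := by
  simp [hmul, wrd, Finsupp.sum_single_index]

lemma e_mul_wrd (a : M) (u : List M) : e a * wrd u = wrd (a :: u) := by
  simp [e, wrd, MonoidAlgebra.single_mul_single]

lemma linearMap_ext₂_wrd {N : Type*} [AddCommGroup N] [Module ℚ N]
    {F G : H M →ₗ[ℚ] H M →ₗ[ℚ] N} (h : ∀ u v, F (wrd u) (wrd v) = G (wrd u) (wrd v)) :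
    F = G := by
  ext m m'
  exact h m.toList m'.toList

lemma hmul_e_mul_e_mul (a b : M) (x y : H M) :
    hmul (e a * x) (e b * y) =
      e (a * b) * (hmul x (e b * y) + hmul (e a * x) y - e 0 * hmul x y) := by
  have key := linearMap_ext₂_wrd
    (F := hmulₗ.compl₁₂ (LinearMap.mulLeft ℚ (e a)) (LinearMap.mulLeft ℚ (e b)))
    (G := (hmulₗ.compl₂ (LinearMap.mulLeft ℚ (e b))
      + hmulₗ.compl₁₂ (LinearMap.mulLeft ℚ (e a)) LinearMap.id
      - hmulₗ.compr₂ (LinearMap.mulLeft ℚ (e 0))).compr₂ (LinearMap.mulLeft ℚ (e (a * b))))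
    fun u v => by
      simp only [LinearMap.compl₁₂_apply, LinearMap.compr₂_apply, LinearMap.compl₂_apply,
        LinearMap.sub_apply, LinearMap.add_apply, LinearMap.mulLeft_apply, LinearMap.id_apply,
        hmulₗ_apply, e_mul_wrd, hmul_wrd_wrd]
      rw [har]
      rfl
  simpa using congr($key x y)

lemma s_one (z : M) : s z 1 = e z := by simp [s]

lemma s_add_two (z : M) (k : ℕ) : s z (k + 2) = e z * s 0 (k + 1) := by
  simp [s, pow_succ']

theorem hmul_s_succ_mul_s_succ_mul (a b : M) (k l : ℕ) (x y : H M) :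
    hmul (s a (k + 1) * x) (s b (l + 1) * y) =
      s (a * b) (k + 1) * hmul x (s b (l + 1) * y) + s (a * b) (l + 1) * hmul (s a (k + 1) * x) y
        - s (a * b) (k + l + 2) * hmul x y := by
  induction k generalizing a b l x y with
  | zero =>
    induction l generalizing a b x y with
    | zero =>
      simp only [s_one, s_add_two, zero_add, mul_assoc, hmul_e_mul_e_mul]
      noncomm_ring
    | succ l ihl =>
      have h := ihl a 0 x y
      simp only [s_one, s_add_two, zero_add, mul_zero, mul_assoc] at h ⊢
      rw [hmul_e_mul_e_mul, h]
      noncomm_ring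
  | succ k ihk =>
    induction l generalizing a b x y with
    | zero =>
      have h := ihk 0 b 0 x y
      simp only [s_one, s_add_two, zero_add, add_zero, zero_mul, mul_assoc] at h ⊢
      rw [hmul_e_mul_e_mul, h]
      noncomm_ring
    | succ l ihl =>
      have h₁ := ihk 0 b (l + 1) x y
      have h₂ := ihl a 0 x y
      have h₃ := ihk 0 0 l x y
      rw [show k + (l + 1) + 2 = k + l + 1 + 2 by omega] at h₁
      rw [show k + 1 + l + 2 = k + l + 1 + 2 by omega] at h₂
      rw [show k + 1 + (l + 1) + 2 = k + l + 2 + 2 by omega]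
      simp only [s_add_two, zero_mul, mul_zero, mul_assoc] at h₁ h₂ h₃ ⊢
      rw [hmul_e_mul_e_mul, h₁, h₂, h₃]
      noncomm_ring

/-- The recursion for the harmonic product in terms of `s_{z,k} = e_z e_0^{k-1}`:
`s_{a,k} w ∗ s_{b,l} w' = s_{ab,k}(w ∗ s_{b,l}w') + s_{ab,l}(s_{a,k}w ∗ w') − s_{ab,k+l}(w ∗ w')`. -/
theorem harmonic_s_recursion (M : Type*) [MonoidWithZero M] (a b : M) (k l : ℕ)
    (hk : 1 ≤ k) (hl : 1 ≤ l) (w w' : H M) :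
    hmul (s a k * w) (s b l * w') =
      s (a * b) k * hmul w (s b l * w') + s (a * b) l * hmul (s a k * w) w'
        - s (a * b) (k + l) * hmul w w' := by
  obtain ⟨k, rfl⟩ := Nat.exists_eq_add_of_le' hk
  obtain ⟨l, rfl⟩ := Nat.exists_eq_add_of_le' hl
  rw [show k + 1 + (l + 1) = k + l + 2 by omega]
  exact hmul_s_succ_mul_s_succ_mul a b k l w w'
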